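/- arXiv:2404.15905 — 4 statements merged into one kernel-verified Lean document; each statement's English description precedes it below -/
import Mathlib

section
/- A real sequence (x_n) converges statistically to x_0 if and only if there exists a set A ⊆ ℕ of natural density 0 such that the subsequence of (x_n) indexed by ℕ \ A converges to x_0 in the usual sense. -/
open Filter Topology

/-- Number of elements of `A` below `n`. -/
noncomputable def densCount (A : Set ℕ) (n : ℕ) : ℕ := Nat.card ↥(A ∩ Set.Iio n)

/-- `A ⊆ ℕ` has natural density `δ`. -/
def HasDensity (A : Set ℕ) (δ : ℝ) : Prop :=
  Tendsto (fun n => (densCount A n : ℝ) / n) atTop (𝓝 δ)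

/-- Upper natural density of `A ⊆ ℕ`. -/
noncomputable def upperDensity (A : Set ℕ) : ℝ :=
  Filter.limsup (fun n => (densCount A n : ℝ) / n) atTop

/-- A sequence in the circle `ℝ/ℤ` converges statistically to `0`. -/
def StatTendstoZero (x : ℕ → AddCircle (1:ℝ)) : Prop :=
  ∀ ε : ℝ, 0 < ε → HasDensity {n | ε ≤ ‖x n‖} 0

/-- The statistically characterized subset `t^s_{(a_n)}(𝕋)`. -/
def sChar (a : ℕ → ℤ) : Set (AddCircle (1:ℝ)) :=
  {x | StatTendstoZero (fun n => a n • x)}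

/-- The characterized subset `t_{(a_n)}(𝕋)`. -/
def charSet (a : ℕ → ℤ) : Set (AddCircle (1:ℝ)) :=
  {x | Tendsto (fun n => a n • x) atTop (𝓝 0)}

/-- `(a_n)` is an arithmetic sequence. -/
def IsArithSeq (a : ℕ → ℕ) : Prop :=
  a 0 = 1 ∧ StrictMono a ∧ ∀ n, a n ∣ a (n + 1)

/-- `d` is the increasing enumeration of `{r·a_k : 1 ≤ r < b_{k+1}}`. -/
def IsDSeq (a d : ℕ → ℕ) : Prop :=
  StrictMono d ∧
    Set.range d = {m : ℕ | ∃ k r : ℕ, 1 ≤ r ∧ r < a (k + 1) / a k ∧ m = r * a k}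

/-- Statistical convergence of a real sequence. -/
def StatTendsto (x : ℕ → ℝ) (x₀ : ℝ) : Prop :=
  ∀ ε : ℝ, 0 < ε → HasDensity {n | ε ≤ |x n - x₀|} 0

/-!
If `x → x₀` off a density-zero set `A`, then `{n | ε ≤ |x n - x₀|}` lies in `A` up to a finite
set, so it has density zero. Conversely, the density-zero sets form a P-ideal: for any sequence
`S j` of density-zero sets there is one density-zero set `A` containing every `S j` up to a
finite set. Applied to `S j = {n | 1/(j+1) ≤ |x n - x₀|}` this gives the exceptional set.
-/

lemma densCount_le_of_inter_Iio_subset {A B : Set ℕ} {n : ℕ} (h : A ∩ Set.Iio n ⊆ B) :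
    densCount A n ≤ densCount B n := by
  simp only [densCount, Nat.card_coe_set_eq]
  exact Set.ncard_le_ncard (Set.subset_inter h Set.inter_subset_right)
    ((Set.finite_Iio n).inter_of_right _)

lemma densCount_union_le (A B : Set ℕ) (n : ℕ) :
    densCount (A ∪ B) n ≤ densCount A n + densCount B n := by
  simp only [densCount, Nat.card_coe_set_eq, Set.union_inter_distrib_right]
  exact Set.ncard_union_le _ _

lemma densCount_Iio_le (N n : ℕ) : densCount (Set.Iio N) n ≤ N := by
  simp only [densCount, Nat.card_coe_set_eq]
  exact (Set.ncard_le_ncard Set.inter_subset_left (Set.finite_Iio N)).trans (Set.ncard_Iio_nat N).le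

lemma hasDensity_zero_of_densCount_le {A : Set ℕ} {f : ℕ → ℝ}
    (hf : Tendsto (fun n => f n / n) atTop (𝓝 0)) (h : ∀ n, (densCount A n : ℝ) ≤ f n) :
    HasDensity A 0 :=
  squeeze_zero (fun n => by positivity) (fun n => div_le_div_of_nonneg_right (h n) n.cast_nonneg) hf

lemma HasDensity.zero_union {A B : Set ℕ} (hA : HasDensity A 0) (hB : HasDensity B 0) :
    HasDensity (A ∪ B) 0 :=
  hasDensity_zero_of_densCount_le (f := fun n => densCount A n + densCount B n)
    (by simpa only [add_div, add_zero] using hA.add hB)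
    (fun n => mod_cast densCount_union_le A B n)

lemma HasDensity.zero_of_eventually_subset {A B : Set ℕ} (hB : HasDensity B 0)
    (h : ∀ᶠ n in atTop, n ∈ A → n ∈ B) : HasDensity A 0 := by
  obtain ⟨N, hN⟩ := eventually_atTop.1 h
  have hAB : A ⊆ B ∪ Set.Iio N := fun n hn =>
    (lt_or_ge n N).elim Or.inr fun hNn => Or.inl (hN n hNn hn)
  have hIio : HasDensity (Set.Iio N) 0 :=
    hasDensity_zero_of_densCount_le (tendsto_const_div_atTop_nhds_zero_nat (N : ℝ))
      (fun n => mod_cast densCount_Iio_le N n)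
  exact hasDensity_zero_of_densCount_le (hB.zero_union hIio)
    (fun n => mod_cast densCount_le_of_inter_Iio_subset (Set.inter_subset_left.trans hAB))

lemma StrictMono.exists_isGreatest_le {N : ℕ → ℕ} (hN : StrictMono N) {j m : ℕ} (h : N j ≤ m) :
    ∃ k, IsGreatest {i | N i ≤ m} k :=
  BddAbove.exists_isGreatest_of_nonempty ⟨m, fun _ hi => hN.le_apply.trans hi⟩ ⟨j, h⟩

lemma exists_hasDensity_zero_almost_superset_of_monotone {S : ℕ → Set ℕ} (hS : Monotone S)
    (hdens : ∀ j, HasDensity (S j) 0) :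
    ∃ A, HasDensity A 0 ∧ ∀ j, ∀ᶠ n in atTop, n ∈ S j → n ∈ A := by
  obtain ⟨N, hN, hNdens⟩ : ∃ N : ℕ → ℕ, StrictMono N ∧
      ∀ j, ∀ m ≥ N j, (densCount (S j) m : ℝ) / m < 1 / ((j : ℝ) + 1) :=
    extraction_forall_of_eventually fun j => eventually_forall_ge_atTop.2 <|
      (hdens j).eventually (gt_mem_nhds Nat.one_div_pos_of_nat)
  refine ⟨⋃ j, S j ∩ Set.Ici (N j), ?_, fun j => eventually_atTop.2
    ⟨N j, fun n hn hnS => Set.mem_iUnion.2 ⟨j, hnS, hn⟩⟩⟩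
  rw [HasDensity, Metric.tendsto_atTop]
  intro ε hε
  obtain ⟨j, hj⟩ := exists_nat_one_div_lt hε
  refine ⟨N j, fun m hm => ?_⟩
  -- below `m`, the union is contained in the last `S k` that has started by time `m`
  obtain ⟨k, hkm, hk⟩ := hN.exists_isGreatest_le hm
  have hsub : (⋃ i, S i ∩ Set.Ici (N i)) ∩ Set.Iio m ⊆ S k := by
    rintro n ⟨hn, hnm⟩
    obtain ⟨i, hni, hin⟩ := Set.mem_iUnion.1 hn
    exact hS (hk (show N i ≤ m from hin.trans hnm.le)) hni
  have hjk : (1 : ℝ) / (k + 1) ≤ 1 / (j + 1) := Nat.one_div_le_one_div (hk hm)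
  rw [Real.dist_0_eq_abs, abs_of_nonneg (by positivity)]
  calc (densCount (⋃ i, S i ∩ Set.Ici (N i)) m : ℝ) / m
      ≤ (densCount (S k) m : ℝ) / m := by
        gcongr
        exact densCount_le_of_inter_Iio_subset hsub
    _ < 1 / (k + 1) := hNdens k m hkm
    _ < ε := hjk.trans_lt hj

lemma exists_hasDensity_zero_almost_superset {S : ℕ → Set ℕ} (hdens : ∀ j, HasDensity (S j) 0) :
    ∃ A, HasDensity A 0 ∧ ∀ j, ∀ᶠ n in atTop, n ∈ S j → n ∈ A := by
  have hacc : ∀ j, HasDensity (Set.accumulate S j) 0 := by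
    intro j
    induction j with
    | zero => simpa only [Set.accumulate_zero_nat] using hdens 0
    | succ j ih => simpa only [Set.accumulate_succ] using ih.zero_union (hdens (j + 1))
  obtain ⟨A, hA, hSA⟩ := exists_hasDensity_zero_almost_superset_of_monotone
    Set.monotone_accumulate hacc
  exact ⟨A, hA, fun j => (hSA j).mono fun n h hn => h (Set.subset_accumulate hn)⟩

theorem stmt_2 (x : ℕ → ℝ) (x₀ : ℝ) :
    StatTendsto x x₀ ↔
      ∃ A : Set ℕ, HasDensity A 0 ∧ Tendsto x (atTop ⊓ 𝓟 Aᶜ) (𝓝 x₀) := by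
  simp only [Metric.tendsto_nhds, eventually_inf_principal, Real.dist_eq, Set.mem_compl_iff]
  constructor
  · intro hx
    obtain ⟨A, hA, hSA⟩ := exists_hasDensity_zero_almost_superset
      fun j : ℕ => hx (1 / ((j : ℝ) + 1)) Nat.one_div_pos_of_nat
    refine ⟨A, hA, fun ε hε => ?_⟩
    obtain ⟨j, hj⟩ := exists_nat_one_div_lt hε
    filter_upwards [hSA j] with n hn hnA
    exact (lt_of_not_ge fun h => hnA (hn h)).trans hj
  · rintro ⟨A, hA, hxA⟩ ε hε
    exact hA.zero_of_eventually_subset <|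
      (hxA ε hε).mono fun n hn hε_le => by_contra fun hnA => (hn hnA).not_ge hε_le
end

section
/- If (a_n) is a b-bounded arithmetic sequence and (d_n) is the associated non-arithmetic sequence enumerating in increasing order all integers r·a_k with 1 ≤ r < b_{k+1}, then t^s_{(a_n)}(T) = t^s_{(d_n)}(T). -/
open Filter Topology

/-! Every `d n` is `r * a k` with `1 ≤ r < b_{k+1} ≤ M`, so `‖d n • x‖ ≤ M * ‖a k • x‖`, and
`n ↦ (k, r)` is injective with `k ≤ n`: the indices where `‖d n • x‖ ≥ ε` inject into `M` copies
of those where `‖a k • x‖ ≥ ε / M`. Conversely each `a j` occurs in `d` at a position at most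
`M * j`. In both directions the exceptional set is thus controlled by `M` copies of an `M`-fold
dilation of a set of density zero, which still has density zero. -/

theorem densCount_le_mul_densCount_of_injOn {A B : Set ℕ} {C : ℕ} (hC : 0 < C) {g : ℕ → ℕ × ℕ}
    (hg : Set.InjOn g A) (hgB : ∀ n ∈ A, (g n).1 ∈ B) (hg₁ : ∀ n, (g n).1 ≤ C * n)
    (hg₂ : ∀ n, (g n).2 < C) (N : ℕ) :
    densCount A N ≤ C * densCount B (C * N) := by
  simp only [densCount, Nat.card_coe_set_eq]
  calc (A ∩ Set.Iio N).ncard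
      ≤ ((B ∩ Set.Iio (C * N)) ×ˢ Set.Iio C).ncard := by
        refine Set.ncard_le_ncard_of_injOn g (fun n hn => ⟨⟨hgB n hn.1, ?_⟩, hg₂ n⟩)
          (hg.mono Set.inter_subset_left)
          ((Set.finite_Iio _).inter_of_right _ |>.prod (Set.finite_Iio _))
        exact (hg₁ n).trans_lt (Nat.mul_lt_mul_of_pos_left hn.2 hC)
    _ = C * (B ∩ Set.Iio (C * N)).ncard := by
        rw [Set.ncard_prod, Set.ncard_Iio_nat, mul_comm]

theorem HasDensity.zero_of_densCount_le {A B : Set ℕ} {C : ℕ} (hC : 0 < C) (hB : HasDensity B 0)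
    (h : ∀ N, densCount A N ≤ C * densCount B (C * N)) : HasDensity A 0 := by
  have hCN : Tendsto (C * ·) atTop atTop := tendsto_id.const_mul_atTop' hC
  have hbound :
      Tendsto (fun N => (C : ℝ) ^ 2 * (densCount B (C * N) / (C * N : ℕ))) atTop (𝓝 0) := by
    simpa using (hB.comp hCN).const_mul ((C : ℝ) ^ 2)
  refine squeeze_zero (fun N => by positivity) (fun N => ?_) hbound
  rcases N.eq_zero_or_pos with rfl | hN
  · simp
  calc (densCount A N : ℝ) / N ≤ (C * densCount B (C * N) : ℕ) / N := by gcongr; exact h N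
    _ = (C : ℝ) ^ 2 * (densCount B (C * N) / (C * N : ℕ)) := by
      push_cast; field_simp

theorem HasDensity.zero_of_injOn {A B : Set ℕ} {C : ℕ} (hB : HasDensity B 0) (hC : 0 < C)
    {g : ℕ → ℕ × ℕ} (hg : Set.InjOn g A) (hgB : ∀ n ∈ A, (g n).1 ∈ B)
    (hg₁ : ∀ n, (g n).1 ≤ C * n) (hg₂ : ∀ n, (g n).2 < C) : HasDensity A 0 :=
  hB.zero_of_densCount_le hC (densCount_le_mul_densCount_of_injOn hC hg hgB hg₁ hg₂)

theorem IsArithSeq.two_le_div {a : ℕ → ℕ} (ha : IsArithSeq a) (n : ℕ) : 2 ≤ a (n + 1) / a n := by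
  obtain ⟨h0, hmono, hdvd⟩ := ha
  have hpos : 1 ≤ a n := h0 ▸ hmono.monotone n.zero_le
  obtain ⟨c, hc⟩ := hdvd n
  have hlt : a n * 1 < a n * c := by rw [mul_one, ← hc]; exact hmono n.lt_succ_self
  rw [hc, Nat.mul_div_cancel_left c hpos]
  exact Nat.lt_of_mul_lt_mul_left hlt

namespace IsDSeq

variable {a d : ℕ → ℕ} (hd : IsDSeq a d)
include hd

theorem exists_eq_mul (n : ℕ) : ∃ k r, 1 ≤ r ∧ r < a (k + 1) / a k ∧ d n = r * a k :=
  hd.2.subset ⟨n, rfl⟩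

/-- Writing `d n = r * a k` with `1 ≤ r < b_{k+1}`, `hd.level n` is `k` and `hd.digit n` is `r`. -/
noncomputable def level (n : ℕ) : ℕ := (hd.exists_eq_mul n).choose

noncomputable def digit (n : ℕ) : ℕ := (hd.exists_eq_mul n).choose_spec.choose

theorem one_le_digit (n : ℕ) : 1 ≤ hd.digit n :=
  (hd.exists_eq_mul n).choose_spec.choose_spec.1

theorem digit_lt (n : ℕ) : hd.digit n < a (hd.level n + 1) / a (hd.level n) :=
  (hd.exists_eq_mul n).choose_spec.choose_spec.2.1

theorem eq_digit_mul (n : ℕ) : d n = hd.digit n * a (hd.level n) :=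
  (hd.exists_eq_mul n).choose_spec.choose_spec.2.2

theorem injective_level_digit : Function.Injective fun n => (hd.level n, hd.digit n) := by
  intro m n h
  simp only [Prod.mk.injEq] at h
  apply hd.1.injective
  rw [hd.eq_digit_mul, hd.eq_digit_mul, h.1, h.2]

theorem le_of_level (n : ℕ) : a (hd.level n) ≤ d n := by
  rw [hd.eq_digit_mul]
  exact Nat.le_mul_of_pos_left _ (hd.one_le_digit n)

theorem norm_zsmul_le {E : Type*} [SeminormedAddGroup E] (x : E) (n : ℕ) :
    ‖(d n : ℤ) • x‖ ≤ hd.digit n * ‖(a (hd.level n) : ℤ) • x‖ := by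
  rw [hd.eq_digit_mul, Nat.cast_mul, mul_zsmul, natCast_zsmul]
  exact norm_nsmul_le

theorem digit_lt_of_div_le {M : ℕ} (hM : ∀ n, a (n + 1) / a n ≤ M) (n : ℕ) : hd.digit n < M :=
  (hd.digit_lt n).trans_le (hM _)

variable (ha : IsArithSeq a)
include ha

theorem exists_eq (j : ℕ) : ∃ n, d n = a j := by
  rw [← Set.mem_range, hd.2]
  exact ⟨j, 1, le_rfl, ha.two_le_div j, (one_mul _).symm⟩

noncomputable def index (j : ℕ) : ℕ := (hd.exists_eq ha j).choose

theorem apply_index (j : ℕ) : d (hd.index ha j) = a j := (hd.exists_eq ha j).choose_spec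

theorem strictMono_index : StrictMono (hd.index ha) := fun i j hij =>
  hd.1.lt_iff_lt.mp (by rw [hd.apply_index, hd.apply_index]; exact ha.2.1 hij)

theorem level_le (n : ℕ) : hd.level n ≤ n :=
  (hd.strictMono_index ha).id_le _ |>.trans <|
    hd.1.le_iff_le.mp ((hd.apply_index ha _).trans_le (hd.le_of_level n))

theorem index_le_mul {M : ℕ} (hM : ∀ n, a (n + 1) / a n ≤ M) (j : ℕ) :
    hd.index ha j ≤ M * j := by
  have hmaps : Set.MapsTo (fun n => (hd.level n, hd.digit n)) ↑(Finset.range (hd.index ha j))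
      ↑(Finset.range j ×ˢ Finset.range M) := by
    intro n hn
    simp only [Finset.coe_range, Set.mem_Iio, Finset.coe_product, Set.mem_prod] at hn ⊢
    refine ⟨ha.2.1.lt_iff_lt.mp ?_, hd.digit_lt_of_div_le hM n⟩
    exact (hd.le_of_level n).trans_lt (hd.apply_index ha j ▸ hd.1 hn)
  simpa [mul_comm] using
    Finset.card_le_card_of_injOn _ hmaps hd.injective_level_digit.injOn

end IsDSeq

theorem stmt_6 (a d : ℕ → ℕ) (ha : IsArithSeq a)
    (hb : ∃ M : ℕ, ∀ n, a (n + 1) / a n ≤ M) (hd : IsDSeq a d) :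
    sChar (fun n => (a n : ℤ)) = sChar (fun n => (d n : ℤ)) := by
  obtain ⟨M, hM⟩ := hb
  have hM₀ : 0 < M := (hd.digit 0).zero_le.trans_lt (hd.digit_lt_of_div_le hM 0)
  ext x
  constructor
  · intro hx ε hε
    refine (hx (ε / M) (by positivity)).zero_of_injOn hM₀ hd.injective_level_digit.injOn
      (fun n hn => ?_) (fun n => (hd.level_le ha n).trans (Nat.le_mul_of_pos_left n hM₀))
      (hd.digit_lt_of_div_le hM)
    rw [Set.mem_ofPred_eq, div_le_iff₀' (by positivity)]
    calc ε ≤ ‖(d n : ℤ) • x‖ := hn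
      _ ≤ hd.digit n * ‖(a (hd.level n) : ℤ) • x‖ := hd.norm_zsmul_le x n
      _ ≤ M * ‖(a (hd.level n) : ℤ) • x‖ := by
        gcongr; exact_mod_cast (hd.digit_lt_of_div_le hM n).le
  · intro hx ε hε
    refine (hx ε hε).zero_of_injOn (g := fun j => (hd.index ha j, 0)) hM₀
      (fun i _ j _ h => (hd.strictMono_index ha).injective (congrArg Prod.fst h))
      (fun j hj => ?_) (hd.index_le_mul ha hM) (fun _ => hM₀)
    simpa [hd.apply_index ha] using hj
end

section
/- For any arithmetic sequence (a_n) and any x ∈ [0,1), there exists a unique sequence of integers (c_n) with 0 ≤ c_n ≤ b_n − 1 for all n, c_n < b_n − 1 for infinitely many n, and x = Σ_{n=1}^∞ c_n/a_n. -/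
open Filter Topology

/-!
Write `b n = a (n + 1) / a n`. A digit sequence `c` with `c n < b n` determines the integers
`v N = a N * ∑_{n<N} c n / a (n + 1)`, which satisfy `v (N + 1) = b N * v N + c N`; its tail
after `N` is at most `∑_{n≥N} (1 / a n - 1 / a (n + 1)) = 1 / a N`, with equality exactly when
all digits from `N` on are maximal. Hence if infinitely many digits are non-maximal, then
`v N = ⌊x * a N⌋₊` for the sum `x`, and `c N = v (N + 1) % b N` is forced. Conversely the
digits `⌊x * a (n + 1)⌋₊ % b n` have `v N = ⌊x * a N⌋₊`, so their sums tend to `x`, and they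
cannot be eventually maximal, for then `x * a N = ⌊x * a N⌋₊ + 1`.
-/

lemma hasSum_sub_succ_of_antitone {f : ℕ → ℝ} (hf : Antitone f)
    (hlim : Tendsto f atTop (𝓝 0)) : HasSum (fun n => f n - f (n + 1)) (f 0) := by
  rw [hasSum_iff_tendsto_nat_of_nonneg (fun n => sub_nonneg.2 (hf n.le_succ))]
  simp_rw [Finset.sum_range_sub']
  simpa using tendsto_const_nhds.sub hlim

def ofMixedDigits (a c : ℕ → ℕ) : ℕ → ℕ
  | 0 => 0
  | n + 1 => a (n + 1) / a n * ofMixedDigits a c n + c n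

noncomputable def greedyDigit (a : ℕ → ℕ) (x : ℝ) (n : ℕ) : ℕ :=
  ⌊x * a (n + 1)⌋₊ % (a (n + 1) / a n)

namespace IsArithSeq

variable {a c : ℕ → ℕ} {x : ℝ}

lemma pos (ha : IsArithSeq a) (n : ℕ) : 0 < a n :=
  Nat.one_pos.trans_le (ha.1 ▸ ha.2.1.monotone (Nat.zero_le n))

lemma div_pos (ha : IsArithSeq a) (n : ℕ) : 0 < a (n + 1) / a n :=
  Nat.div_pos (ha.2.1 n.lt_succ_self).le (ha.pos n)

lemma cast_succ_eq (ha : IsArithSeq a) (n : ℕ) :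
    (a (n + 1) : ℝ) = ((a (n + 1) / a n : ℕ) : ℝ) * a n := by
  exact_mod_cast (Nat.div_mul_cancel (ha.2.2 n)).symm

lemma tendsto_natCast_atTop (ha : IsArithSeq a) : Tendsto (fun n => (a n : ℝ)) atTop atTop :=
  tendsto_natCast_atTop_atTop.comp ha.2.1.tendsto_atTop

lemma inv_sub_inv_eq (ha : IsArithSeq a) (n : ℕ) :
    1 / (a n : ℝ) - 1 / a (n + 1) = (((a (n + 1) / a n : ℕ) : ℝ) - 1) / a (n + 1) := by
  have := ha.pos n
  have := ha.div_pos n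
  rw [ha.cast_succ_eq n]
  field_simp

lemma hasSum_inv_sub_inv (ha : IsArithSeq a) (N : ℕ) :
    HasSum (fun i => 1 / (a (i + N) : ℝ) - 1 / a (i + N + 1)) (1 / a N) := by
  have hanti : Antitone fun i => 1 / (a (i + N) : ℝ) := fun i j hij => by
    have := ha.pos (i + N)
    dsimp only
    gcongr
    exact ha.2.1.monotone (by omega)
  have hlim : Tendsto (fun i => 1 / (a (i + N) : ℝ)) atTop (𝓝 0) := by
    simpa only [one_div, Function.comp_def] using
      tendsto_inv_atTop_zero.comp (ha.tendsto_natCast_atTop.comp (tendsto_add_atTop_nat N))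
  simpa only [Nat.zero_add, Nat.add_right_comm _ 1 N] using hasSum_sub_succ_of_antitone hanti hlim

lemma natCast_div_le_inv_sub_inv (ha : IsArithSeq a) {k n : ℕ} (hk : k < a (n + 1) / a n) :
    (k : ℝ) / a (n + 1) ≤ 1 / a n - 1 / a (n + 1) := by
  rw [ha.inv_sub_inv_eq]
  gcongr
  rw [le_sub_iff_add_le]
  exact_mod_cast hk

lemma sum_range_eq_ofMixedDigits (ha : IsArithSeq a) (c : ℕ → ℕ) (N : ℕ) :
    ∑ n ∈ Finset.range N, (c n : ℝ) / a (n + 1) = (ofMixedDigits a c N : ℝ) / a N := by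
  induction N with
  | zero => simp [ofMixedDigits]
  | succ N ih =>
    have := ha.pos N
    have := ha.div_pos N
    rw [Finset.sum_range_succ, ih, ofMixedDigits, ha.cast_succ_eq N]
    push_cast
    field_simp

lemma summable_digits (ha : IsArithSeq a) (hc : ∀ n, c n < a (n + 1) / a n) :
    Summable fun n => (c n : ℝ) / a (n + 1) :=
  .of_nonneg_of_le (fun n => by positivity) (fun n => ha.natCast_div_le_inv_sub_inv (hc n))
    (by simpa using (ha.hasSum_inv_sub_inv 0).summable)

lemma tsum_tail_lt (ha : IsArithSeq a) (hc : ∀ n, c n < a (n + 1) / a n)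
    (hinf : {n | c n + 1 < a (n + 1) / a n}.Infinite) (N : ℕ) :
    ∑' i, (c (i + N) : ℝ) / a (i + N + 1) < 1 / a N := by
  obtain ⟨n, hn, hNn⟩ := hinf.exists_gt N
  obtain ⟨i, rfl⟩ : ∃ i, n = i + N := ⟨n - N, by omega⟩
  have hstrict : (c (i + N) : ℝ) / a (i + N + 1) < 1 / a (i + N) - 1 / a (i + N + 1) := by
    have : (0 : ℝ) < 1 / a (i + N + 1) := by have := ha.pos (i + N + 1); positivity
    have hle := ha.natCast_div_le_inv_sub_inv (k := c (i + N) + 1) hn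
    rw [Nat.cast_succ, add_div] at hle
    linarith
  rw [← (ha.hasSum_inv_sub_inv N).tsum_eq]
  exact Summable.tsum_lt_tsum (fun j => ha.natCast_div_le_inv_sub_inv (hc (j + N))) hstrict
    ((summable_nat_add_iff N).2 (ha.summable_digits hc)) (ha.hasSum_inv_sub_inv N).summable

lemma ofMixedDigits_eq_floor (ha : IsArithSeq a) (hc : ∀ n, c n < a (n + 1) / a n)
    (hinf : {n | c n + 1 < a (n + 1) / a n}.Infinite) (N : ℕ) :
    ofMixedDigits a c N = ⌊(∑' n, (c n : ℝ) / a (n + 1)) * a N⌋₊ := by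
  have hsplit := (ha.summable_digits hc).sum_add_tsum_nat_add N
  rw [ha.sum_range_eq_ofMixedDigits] at hsplit
  set T := ∑' i, (c (i + N) : ℝ) / a (i + N + 1)
  have hT0 : 0 ≤ T := tsum_nonneg fun i => by positivity
  have hT1 : T * a N < 1 :=
    (lt_div_iff₀ (Nat.cast_pos.2 (ha.pos N))).1 (ha.tsum_tail_lt hc hinf N)
  have hx : (∑' n, (c n : ℝ) / a (n + 1)) * a N = ofMixedDigits a c N + T * a N := by
    have := ha.pos N
    rw [← hsplit]
    field_simp
  rw [eq_comm, Nat.floor_eq_iff (by positivity), hx]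
  constructor <;> nlinarith

lemma eq_greedyDigit (ha : IsArithSeq a) (hc : ∀ n, c n < a (n + 1) / a n)
    (hinf : {n | c n + 1 < a (n + 1) / a n}.Infinite) :
    c = greedyDigit a (∑' n, (c n : ℝ) / a (n + 1)) := by
  funext n
  rw [greedyDigit, ← ha.ofMixedDigits_eq_floor hc hinf, ofMixedDigits,
    Nat.mul_add_mod_self_left, Nat.mod_eq_of_lt (hc n)]

lemma greedyDigit_lt (ha : IsArithSeq a) (x : ℝ) (n : ℕ) :
    greedyDigit a x n < a (n + 1) / a n :=
  Nat.mod_lt _ (ha.div_pos n)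

lemma ofMixedDigits_greedyDigit (ha : IsArithSeq a) (hx1 : x < 1) (N : ℕ) :
    ofMixedDigits a (greedyDigit a x) N = ⌊x * a N⌋₊ := by
  induction N with
  | zero => simp [ofMixedDigits, ha.1, Nat.floor_eq_zero.2 hx1]
  | succ N ih =>
    have hdiv : ⌊x * a (N + 1)⌋₊ / (a (N + 1) / a N) = ⌊x * a N⌋₊ := by
      have := (ha.div_pos N).ne'
      rw [← Nat.floor_div_natCast, ha.cast_succ_eq N]
      field_simp
    rw [ofMixedDigits, ih, greedyDigit, ← hdiv, Nat.div_add_mod]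

lemma hasSum_greedyDigit (ha : IsArithSeq a) (hx0 : 0 ≤ x) (hx1 : x < 1) :
    HasSum (fun n => (greedyDigit a x n : ℝ) / a (n + 1)) x := by
  rw [hasSum_iff_tendsto_nat_of_nonneg (fun n => by positivity)]
  simp_rw [ha.sum_range_eq_ofMixedDigits, ha.ofMixedDigits_greedyDigit hx1]
  exact (tendsto_nat_floor_mul_div_atTop hx0).comp ha.tendsto_natCast_atTop

lemma infinite_greedyDigit_add_one_lt (ha : IsArithSeq a) (hx0 : 0 ≤ x) (hx1 : x < 1) :
    {n | greedyDigit a x n + 1 < a (n + 1) / a n}.Infinite := by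
  refine Set.infinite_of_forall_exists_gt fun M => ?_
  by_contra! hmax
  set N := M + 1
  have hmax_digit (i : ℕ) : greedyDigit a x (i + N) + 1 = a (i + N + 1) / a (i + N) := by
    have := ha.greedyDigit_lt x (i + N)
    have := mt (hmax (i + N)) (by omega)
    simp only [Set.mem_ofPred_eq] at this
    omega
  have htail : HasSum (fun i => (greedyDigit a x (i + N) : ℝ) / a (i + N + 1)) (1 / a N) := by
    convert ha.hasSum_inv_sub_inv N using 2 with i
    rw [ha.inv_sub_inv_eq, ← hmax_digit i]
    push_cast
    ring
  have hsplit := (ha.hasSum_greedyDigit hx0 hx1).summable.sum_add_tsum_nat_add N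
  rw [htail.tsum_eq, (ha.hasSum_greedyDigit hx0 hx1).tsum_eq, ha.sum_range_eq_ofMixedDigits,
    ha.ofMixedDigits_greedyDigit hx1] at hsplit
  have : x * a N = ⌊x * a N⌋₊ + 1 := by
    have := ha.pos N
    rw [← add_div, div_eq_iff (by positivity)] at hsplit
    linarith
  linarith [Nat.lt_floor_add_one (x * a N)]

end IsArithSeq

theorem stmt_7 (a : ℕ → ℕ) (ha : IsArithSeq a) (x : ℝ) (hx0 : 0 ≤ x) (hx1 : x < 1) :
    ∃! c : ℕ → ℕ,
      (∀ n, c n < a (n + 1) / a n) ∧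
      {n | c n + 1 < a (n + 1) / a n}.Infinite ∧
      x = ∑' n : ℕ, (c n : ℝ) / a (n + 1) := by
  refine ⟨greedyDigit a x, ⟨ha.greedyDigit_lt x, ha.infinite_greedyDigit_add_one_lt hx0 hx1,
    (ha.hasSum_greedyDigit hx0 hx1).tsum_eq.symm⟩, ?_⟩
  rintro c ⟨hc, hinf, rfl⟩
  exact ha.eq_greedyDigit hc hinf
end

section
/- If (a_n) is a b-divergent arithmetic sequence (i.e., b_n = a_n/a_{n-1} → ∞), then t_{(a_n)}(T) is not contained in t^s_{(d_n)}(T); consequently t^s_{(a_n)}(T) is not contained in t^s_{(d_n)}(T). -/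
open Filter Topology

/-!
Take `x = ∑ 1 / a_j` in `ℝ/ℤ`. If `a_k ∣ m`, then `m x ≡ m ∑_{j > k} 1 / a_j` modulo `1`, and since
`a_{j+1} ≥ 2 a_j` this tail lies between `m / a_{k+1}` and `m / a_{k+1} + 2 m / a_{k+2}`. With
`m = a_k` this is at most `2 / b_{k+1} → 0`, so `x ∈ t_{(a_n)}(𝕋)`. With `m = r a_k` and
`b_{k+1} / 4 ≤ r ≤ b_{k+1} / 2` it lies in `[1/4, 3/4]` as soon as `b_{k+2} ≥ 4`, so in the block of
the `b_{k+1} - 1` terms `r a_k` of `(d_n)` about a quarter keep `d_n x` at distance `≥ 1/4` from `0`.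
Summing over the blocks, these indices have positive lower density along the block ends, so
`x ∉ t^s_{(d_n)}(𝕋)`. Ordinary convergence implies statistical convergence, which gives the second
claim.
-/

lemma densCount_eq_ncard (A : Set ℕ) (n : ℕ) : densCount A n = (A ∩ Set.Iio n).ncard := by
  rw [densCount, Nat.card_coe_set_eq]

lemma densCount_add_ncard_inter_Ico (A : Set ℕ) {m n : ℕ} (h : m ≤ n) :
    densCount A m + (A ∩ Set.Ico m n).ncard = densCount A n := by
  have hsplit : A ∩ Set.Iio n = (A ∩ Set.Iio m) ∪ (A ∩ Set.Ico m n) := by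
    rw [← Set.inter_union_distrib_left, Set.Iio_union_Ico_eq_Iio h]
  rw [densCount_eq_ncard, densCount_eq_ncard, hsplit, Set.ncard_union_eq
    (Set.disjoint_left.2 fun _ hx hx' => (not_le.2 hx.2) hx'.2.1)
    ((Set.finite_Iio m).inter_of_right A) ((Set.finite_Ico m n).inter_of_right A)]

lemma densCount_mono (A : Set ℕ) : Monotone (densCount A) := fun _ _ h =>
  (densCount_add_ncard_inter_Ico A h).symm ▸ Nat.le_add_right _ _

lemma hasDensity_zero_of_finite {A : Set ℕ} (hA : A.Finite) : HasDensity A 0 := by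
  refine squeeze_zero (fun n => by positivity) (fun n => ?_)
    (tendsto_const_div_atTop_nhds_zero_nat (A.ncard : ℝ))
  rw [densCount_eq_ncard]
  gcongr
  exact Set.inter_subset_left

lemma charSet_subset_sChar (a : ℕ → ℤ) : charSet a ⊆ sChar a := by
  intro x hx ε hε
  apply hasDensity_zero_of_finite
  have h := (tendsto_zero_iff_norm_tendsto_zero.1 hx).eventually (gt_mem_nhds hε)
  rw [← Nat.cofinite_eq_atTop, eventually_cofinite] at h
  simpa using h

lemma not_hasDensity_zero_of_blocks {S : Set ℕ} {N : ℕ → ℕ} (hN : StrictMono N) {c : ℕ}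
    (hblock : ∀ k, N (k + 1) + c * densCount S (N k) ≤ N k + c * densCount S (N (k + 1))) :
    ¬ HasDensity S 0 := by
  intro hS
  have hgrowth (k : ℕ) : (N k : ℝ) - N 0 ≤ c * densCount S (N k) := by
    have hsum : N k + c * densCount S (N 0) ≤ N 0 + c * densCount S (N k) := by
      induction k with
      | zero => exact le_rfl
      | succ k ih => linarith [hblock k]
    have : (N k : ℝ) ≤ N 0 + c * densCount S (N k) := by
      exact_mod_cast (Nat.le_add_right _ _).trans hsum
    linarith
  have hNreal : Tendsto (fun k => (N k : ℝ)) atTop atTop :=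
    tendsto_natCast_atTop_atTop.comp hN.tendsto_atTop
  have hlower : Tendsto (fun k => 1 - (N 0 : ℝ) / N k) atTop (𝓝 (1 - 0)) :=
    tendsto_const_nhds.sub (tendsto_const_nhds.div_atTop hNreal)
  have hupper : Tendsto (fun k => c * ((densCount S (N k) : ℝ) / N k)) atTop (𝓝 (c * 0)) :=
    ((hS.comp hN.tendsto_atTop).const_mul _)
  refine absurd (le_of_tendsto_of_tendsto hlower hupper ?_) (by norm_num)
  filter_upwards [hNreal.eventually_gt_atTop 0] with k hk
  rw [one_sub_div hk.ne', mul_div_assoc']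
  exact div_le_div_of_nonneg_right (hgrowth k) hk.le

namespace StrictMono

variable {d : ℕ → ℕ} (hd : StrictMono d)
include hd

lemma densCount_range_apply (n : ℕ) : densCount (Set.range d) (d n) = n := by
  have : Set.range d ∩ Set.Iio (d n) = d '' Set.Iio n := by
    ext m
    constructor
    · rintro ⟨⟨k, rfl⟩, hk⟩
      exact ⟨k, hd.lt_iff_lt.1 hk, rfl⟩
    · rintro ⟨k, hk, rfl⟩
      exact ⟨⟨k, rfl⟩, hd.lt_iff_lt.2 hk⟩
  rw [densCount_eq_ncard, this, Set.ncard_image_of_injective _ hd.injective, Set.ncard_Iio_nat]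

lemma lt_iff_lt_densCount_range {n m : ℕ} : d n < m ↔ n < densCount (Set.range d) m := by
  constructor
  · intro h
    have hsub : d '' Set.Iio (n + 1) ⊆ Set.range d ∩ Set.Iio m := by
      rintro _ ⟨k, hk, rfl⟩
      exact ⟨⟨k, rfl⟩, (hd.monotone (Nat.lt_succ_iff.1 hk)).trans_lt h⟩
    have := Set.ncard_le_ncard hsub ((Set.finite_Iio m).inter_of_right _)
    rw [Set.ncard_image_of_injective _ hd.injective, Set.ncard_Iio_nat] at this
    rw [densCount_eq_ncard]
    omega
  · intro h
    by_contra! hm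
    exact (densCount_mono _ hm).trans_eq (hd.densCount_range_apply n) |>.not_gt h

lemma densCount_preimage (A : Set ℕ) (m : ℕ) :
    densCount (d ⁻¹' A) (densCount (Set.range d) m) = densCount (Set.range d ∩ A) m := by
  rw [densCount_eq_ncard, densCount_eq_ncard, ← Set.ncard_image_of_injective _ hd.injective]
  congr 1
  ext m
  constructor
  · rintro ⟨k, ⟨hk, hkm⟩, rfl⟩
    exact ⟨⟨⟨k, rfl⟩, hk⟩, hd.lt_iff_lt_densCount_range.2 hkm⟩
  · rintro ⟨⟨⟨k, rfl⟩, hk⟩, hkm⟩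
    exact ⟨k, ⟨hk, hd.lt_iff_lt_densCount_range.1 hkm⟩, rfl⟩

end StrictMono

namespace UnitAddCircle

lemma norm_coe_le_abs (y : ℝ) : ‖(y : AddCircle (1 : ℝ))‖ ≤ |y| := by
  simpa [UnitAddCircle.norm_eq] using round_le y 0

lemma quarter_le_norm_coe {y : ℝ} (h₁ : 1 / 4 ≤ y) (h₂ : y ≤ 3 / 4) :
    1 / 4 ≤ ‖(y : AddCircle (1 : ℝ))‖ := by
  rw [UnitAddCircle.norm_eq]
  rcases le_or_gt (round y) 0 with h | h
  · have : (round y : ℝ) ≤ 0 := by exact_mod_cast h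
    rw [abs_of_nonneg (by linarith)]
    linarith
  · have : (1 : ℝ) ≤ round y := by exact_mod_cast h
    rw [abs_of_nonpos (by linarith)]
    linarith

lemma coe_natCast_add (n : ℕ) (y : ℝ) : ((n + y : ℝ) : AddCircle (1 : ℝ)) = y := by
  rw [AddCircle.coe_add, ← nsmul_one, AddCircle.coe_nsmul, AddCircle.coe_period, smul_zero,
    zero_add]

end UnitAddCircle

noncomputable def tailSum (a : ℕ → ℕ) (k : ℕ) : ℝ := ∑' j, ((a (j + k) : ℝ))⁻¹

lemma tailSum_nonneg (a : ℕ → ℕ) (k : ℕ) : 0 ≤ tailSum a k :=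
  tsum_nonneg fun _ => by positivity

noncomputable def invSum (a : ℕ → ℕ) : AddCircle (1 : ℝ) := ↑(∑' j, ((a j : ℝ))⁻¹)

def farMultiples (a : ℕ → ℕ) : Set ℕ := {m | 1 / 4 ≤ ‖(m : ℤ) • invSum a‖}

def dSet (a : ℕ → ℕ) : Set ℕ :=
  {m : ℕ | ∃ k r : ℕ, 1 ≤ r ∧ r < a (k + 1) / a k ∧ m = r * a k}

namespace IsArithSeq

variable {a : ℕ → ℕ} (ha : IsArithSeq a)
include ha

lemma pos_s12 (k : ℕ) : 0 < a k :=
  ha.1 ▸ Nat.one_pos |>.trans_le (ha.2.1.monotone (Nat.zero_le k))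

lemma dvd_of_le {i j : ℕ} (h : i ≤ j) : a i ∣ a j := by
  induction j, h using Nat.le_induction with
  | base => exact dvd_rfl
  | succ j _ ih => exact ih.trans (ha.2.2 j)

lemma div_mul_cancel (k : ℕ) : a (k + 1) / a k * a k = a (k + 1) :=
  Nat.div_mul_cancel (ha.2.2 k)

lemma two_le_div_s12 (k : ℕ) : 2 ≤ a (k + 1) / a k := by
  have hmul := ha.div_mul_cancel k
  have hlt : a k < a (k + 1) := ha.2.1 k.lt_succ_self
  by_contra! h
  interval_cases hb : a (k + 1) / a k <;> omega

lemma mul_le_of_le_div {c k : ℕ} (h : c ≤ a (k + 1) / a k) : c * a k ≤ a (k + 1) :=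
  (Nat.mul_le_mul_right _ h).trans (ha.div_mul_cancel k).le

lemma mul_two_pow_le (k j : ℕ) : a k * 2 ^ j ≤ a (j + k) := by
  induction j with
  | zero => simp
  | succ j ih =>
    calc a k * 2 ^ (j + 1) = 2 * (a k * 2 ^ j) := by ring
      _ ≤ 2 * a (j + k) := by omega
      _ ≤ a (j + 1 + k) := by
        rw [Nat.add_right_comm]
        exact ha.mul_le_of_le_div (ha.two_le_div_s12 _)

lemma inv_apply_add_le (j k : ℕ) : ((a (j + k) : ℝ))⁻¹ ≤ (a k : ℝ)⁻¹ * (1 / 2) ^ j := by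
  have hk : (0 : ℝ) < a k := by exact_mod_cast ha.pos_s12 k
  rw [one_div, inv_pow, ← mul_inv]
  exact inv_anti₀ (by positivity) (by exact_mod_cast ha.mul_two_pow_le k j)

lemma summable_tail (k : ℕ) : Summable fun j => ((a (j + k) : ℝ))⁻¹ :=
  (summable_geometric_two.mul_left _).of_nonneg_of_le (fun _ => by positivity)
    (ha.inv_apply_add_le · k)

lemma tailSum_le (k : ℕ) : tailSum a k ≤ 2 / a k :=
  calc tailSum a k ≤ ∑' j, (a k : ℝ)⁻¹ * (1 / 2) ^ j :=
        (ha.summable_tail k).tsum_le_tsum (ha.inv_apply_add_le · k)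
          (summable_geometric_two.mul_left _)
    _ = 2 / a k := by rw [tsum_mul_left, tsum_geometric_two, inv_mul_eq_div]

lemma tailSum_eq (k : ℕ) : tailSum a k = (a k : ℝ)⁻¹ + tailSum a (k + 1) := by
  rw [tailSum, (ha.summable_tail k).tsum_eq_zero_add, tailSum]
  simp only [zero_add, Nat.add_right_comm _ 1 k, Nat.add_assoc]

lemma inv_le_tailSum (k : ℕ) : (a k : ℝ)⁻¹ ≤ tailSum a k := by
  rw [ha.tailSum_eq k]
  exact le_add_of_nonneg_right (tailSum_nonneg a _)

lemma zsmul_invSum {k m : ℕ} (h : a k ∣ m) :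
    (m : ℤ) • invSum a = ((m * tailSum a (k + 1) : ℝ) : AddCircle (1 : ℝ)) := by
  have hsplit := (ha.summable_tail 0).sum_add_tsum_nat_add (k + 1)
  simp only [Nat.add_zero] at hsplit
  have hhead : (m : ℝ) * ∑ j ∈ Finset.range (k + 1), ((a j : ℝ))⁻¹ =
      ((∑ j ∈ Finset.range (k + 1), m / a j : ℕ) : ℝ) := by
    rw [Finset.mul_sum, Nat.cast_sum]
    refine Finset.sum_congr rfl fun j hj => ?_
    rw [Nat.cast_div ((ha.dvd_of_le (Finset.mem_range_succ_iff.1 hj)).trans h)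
      (by exact_mod_cast (ha.pos_s12 j).ne'), div_eq_mul_inv]
  rw [invSum, natCast_zsmul, ← AddCircle.coe_nsmul, nsmul_eq_mul, ← hsplit, mul_add, hhead,
    UnitAddCircle.coe_natCast_add, tailSum]

lemma norm_zsmul_invSum_le (k : ℕ) : ‖(a k : ℤ) • invSum a‖ ≤ 2 / (a (k + 1) / a k : ℕ) := by
  have hk : (0 : ℝ) < a k := by exact_mod_cast ha.pos_s12 k
  have hsucc : (a (k + 1) : ℝ) = (a (k + 1) / a k : ℕ) * a k := by
    exact_mod_cast (ha.div_mul_cancel k).symm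
  rw [ha.zsmul_invSum dvd_rfl]
  refine (UnitAddCircle.norm_coe_le_abs _).trans ?_
  rw [abs_of_nonneg (mul_nonneg hk.le (tailSum_nonneg a _))]
  calc (a k : ℝ) * tailSum a (k + 1) ≤ a k * (2 / a (k + 1)) :=
        mul_le_mul_of_nonneg_left (ha.tailSum_le _) hk.le
    _ = 2 / (a (k + 1) / a k : ℕ) := by
        rw [hsucc]
        field_simp

lemma invSum_mem_charSet (hb : Tendsto (fun n => a (n + 1) / a n) atTop atTop) :
    invSum a ∈ charSet (fun n => (a n : ℤ)) :=
  tendsto_zero_iff_norm_tendsto_zero.2 <| squeeze_zero (fun _ => norm_nonneg _)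
    ha.norm_zsmul_invSum_le
    (tendsto_const_nhds.div_atTop (tendsto_natCast_atTop_atTop.comp hb))

lemma quarter_le_norm_zsmul_invSum {k m : ℕ} (hdvd : a k ∣ m) (h₁ : a (k + 1) ≤ 4 * m)
    (h₂ : 2 * m ≤ a (k + 1)) (h₃ : 8 * m ≤ a (k + 2)) :
    1 / 4 ≤ ‖(m : ℤ) • invSum a‖ := by
  have hpos : (0 : ℝ) < a (k + 1) := by exact_mod_cast ha.pos_s12 (k + 1)
  have hpos₂ : (0 : ℝ) < a (k + 2) := by exact_mod_cast ha.pos_s12 (k + 2)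
  have hm : (0 : ℝ) ≤ m := m.cast_nonneg
  have hhead : (m : ℝ) * (a (k + 1) : ℝ)⁻¹ ∈ Set.Icc (1 / 4) (1 / 2) := by
    rw [← div_eq_mul_inv, Set.mem_Icc, le_div_iff₀ hpos, div_le_iff₀ hpos]
    constructor <;> linarith [show (a (k + 1) : ℝ) ≤ 4 * m by exact_mod_cast h₁,
      show 2 * (m : ℝ) ≤ a (k + 1) by exact_mod_cast h₂]
  have htail : (m : ℝ) * tailSum a (k + 2) ≤ 1 / 4 := by
    calc (m : ℝ) * tailSum a (k + 2) ≤ m * (2 / a (k + 2)) :=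
          mul_le_mul_of_nonneg_left (ha.tailSum_le _) hm
      _ ≤ 1 / 4 := by
          rw [mul_div_assoc', div_le_iff₀ hpos₂]
          linarith [show 8 * (m : ℝ) ≤ a (k + 2) by exact_mod_cast h₃]
  rw [ha.zsmul_invSum hdvd, ha.tailSum_eq, mul_add]
  apply UnitAddCircle.quarter_le_norm_coe
  · linarith [hhead.1, mul_nonneg hm (tailSum_nonneg a (k + 2))]
  · linarith [hhead.2]

lemma mul_mem_Ico {k r : ℕ} (h₁ : 1 ≤ r) (h₂ : r < a (k + 1) / a k) :
    r * a k ∈ Set.Ico (a k) (a (k + 1)) :=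
  ⟨Nat.le_mul_of_pos_left _ h₁, (ha.mul_le_of_le_div h₂).trans_lt' <|
    Nat.mul_lt_mul_of_pos_right (Nat.lt_succ_self r) (ha.pos_s12 k)⟩

lemma dSet_inter_Ico (k : ℕ) :
    dSet a ∩ Set.Ico (a k) (a (k + 1)) = (· * a k) '' Set.Ico 1 (a (k + 1) / a k) := by
  ext m
  constructor
  · rintro ⟨⟨j, r, h₁, h₂, rfl⟩, hm⟩
    have hj := ha.mul_mem_Ico h₁ h₂
    have hjk : j < k + 1 := ha.2.1.lt_iff_lt.1 (hj.1.trans_lt hm.2)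
    have hkj : k < j + 1 := ha.2.1.lt_iff_lt.1 (hm.1.trans_lt hj.2)
    obtain rfl : j = k := by omega
    exact ⟨r, ⟨h₁, h₂⟩, rfl⟩
  · rintro ⟨r, ⟨h₁, h₂⟩, rfl⟩
    exact ⟨⟨k, r, h₁, h₂, rfl⟩, ha.mul_mem_Ico h₁ h₂⟩

lemma densCount_dSet_succ (k : ℕ) :
    densCount (dSet a) (a (k + 1)) = densCount (dSet a) (a k) + (a (k + 1) / a k - 1) := by
  rw [← densCount_add_ncard_inter_Ico _ (ha.2.1.monotone k.le_succ), ha.dSet_inter_Ico,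
    Set.ncard_image_of_injective _ (mul_left_injective₀ (ha.pos_s12 k).ne'), Set.ncard_Ico_nat]

lemma densCount_dSet_succ_le {k : ℕ} (hk : 4 ≤ a (k + 2) / a (k + 1)) :
    densCount (dSet a) (a (k + 1)) + 4 * densCount (dSet a ∩ farMultiples a) (a k) ≤
      densCount (dSet a) (a k) + 4 * densCount (dSet a ∩ farMultiples a) (a (k + 1)) := by
  have hcountFar := densCount_add_ncard_inter_Ico (dSet a ∩ farMultiples a)
    (ha.2.1.monotone (Nat.le_add_right k 1))
  have hcountAll := ha.densCount_dSet_succ k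
  set b := a (k + 1) / a k
  have hb₂ : 2 ≤ b := ha.two_le_div_s12 k
  have hmul : b * a k = a (k + 1) := ha.div_mul_cancel k
  have hsub : (· * a k) '' Set.Ico ((b + 3) / 4) (b / 2 + 1) ⊆
      dSet a ∩ farMultiples a ∩ Set.Ico (a k) (a (k + 1)) := by
    rintro _ ⟨r, ⟨hr₁, hr₂⟩, rfl⟩
    have h₁ : 1 ≤ r := by omega
    have h₂ : r < b := by omega
    have hfar : r * a k ∈ farMultiples a := by
      have h₃ := ha.mul_le_of_le_div hk
      refine ha.quarter_le_norm_zsmul_invSum (dvd_mul_left _ _) ?_ ?_ ?_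
      · nlinarith [show b ≤ 4 * r by omega]
      · nlinarith [show 2 * r ≤ b by omega]
      · nlinarith [show 2 * r ≤ b by omega]
    exact ⟨⟨⟨k, r, h₁, h₂, rfl⟩, hfar⟩, ha.mul_mem_Ico h₁ h₂⟩
  have hcard := Set.ncard_le_ncard hsub ((Set.finite_Ico _ _).inter_of_right _)
  rw [Set.ncard_image_of_injective _ (mul_left_injective₀ (ha.pos_s12 k).ne'),
    Set.ncard_Ico_nat] at hcard
  omega

lemma invSum_notMem_sChar {d : ℕ → ℕ} (hd : IsDSeq a d)
    (hb : Tendsto (fun n => a (n + 1) / a n) atTop atTop) :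
    invSum a ∉ sChar (fun n => (d n : ℤ)) := by
  intro hx
  obtain ⟨j, hj⟩ := eventually_atTop.1 (hb.eventually_ge_atTop 4)
  have hrange : Set.range d = dSet a := hd.2
  have hidx (k : ℕ) : a (k + 1 + j) = a (k + j + 1) := by rw [Nat.add_right_comm]
  refine not_hasDensity_zero_of_blocks (S := d ⁻¹' farMultiples a) (c := 4)
    (N := fun k => densCount (Set.range d) (a (k + j))) ?_ ?_ (hx (1 / 4) (by norm_num))
  · refine strictMono_nat_of_lt_succ fun k => ?_
    simp only [hrange, hidx, ha.densCount_dSet_succ]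
    have := ha.two_le_div_s12 (k + j)
    omega
  · intro k
    simp only [hd.1.densCount_preimage, hidx]
    rw [hrange]
    exact ha.densCount_dSet_succ_le (hj (k + j + 1) (by omega))

end IsArithSeq

theorem stmt_12 (a d : ℕ → ℕ) (ha : IsArithSeq a) (hd : IsDSeq a d)
    (hbdiv : Tendsto (fun n => a (n + 1) / a n) atTop atTop) :
    ¬ charSet (fun n => (a n : ℤ)) ⊆ sChar (fun n => (d n : ℤ)) ∧
    ¬ sChar (fun n => (a n : ℤ)) ⊆ sChar (fun n => (d n : ℤ)) := by
  have hmem := ha.invSum_mem_charSet hbdiv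
  have hnotMem := ha.invSum_notMem_sChar hd hbdiv
  exact ⟨fun h => hnotMem (h hmem), fun h => hnotMem (h (charSet_subset_sChar _ hmem))⟩
end
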